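/- arXiv:2509.23485 — 3 statements merged into one kernel-verified Lean document; each statement's English description precedes it below -/
import Mathlib

section
/- Let p be a prime number and let A and B be commutative rings of characteristic p. Suppose B is an étale A-algebra. If A is a perfect ring (i.e., the Frobenius endomorphism x ↦ xᵖ of A is bijective), then B is a perfect ring. -/
/-!
The `p`-th power map `B → B` is `A`-linear when its target is made an `A`-algebra through the
Frobenius of `A`, and since that Frobenius is an isomorphism this twisted target is again étale.
It is surjective because the twist is unramified over the image `C` of the Frobenius and every
`p`-th power lies in `C`: the diagonal ideal of `B ⊗[C] B` is then nil and finitely generated,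
hence nilpotent, so unramifiedness makes `C → B` a finite epimorphism. Its kernel consists of
elements with `x ^ p = 0`, so it is nilpotent; formal smoothness of the target then gives a
section, and formal unramifiedness of the source makes that section a two-sided inverse.
-/

universe u

open TensorProduct Function

section Radicial

variable {p : ℕ} {C B : Type*} [CommRing C] [CommRing B] [Algebra C B] [ExpChar B p]

lemma expChar_tensorProduct_self : ExpChar (B ⊗[C] B) p :=
  expChar_of_injective_algebraMap
    (LeftInverse.injective (g := Algebra.TensorProduct.lmul' C) fun b => by simp) p

lemma one_tmul_sub_tmul_one_pow (b : B) :
    ((1 : B) ⊗ₜ[C] b - b ⊗ₜ[C] 1) ^ p = (1 : B) ⊗ₜ[C] (b ^ p) - (b ^ p) ⊗ₜ[C] 1 := by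
  have := expChar_tensorProduct_self (p := p) (C := C) (B := B)
  rw [sub_pow_expChar, Algebra.TensorProduct.tmul_pow, Algebra.TensorProduct.tmul_pow, one_pow]

lemma KaehlerDifferential.ideal_le_nilradical_of_pow_mem_range
    (h : ∀ b : B, b ^ p ∈ (algebraMap C B).range) :
    KaehlerDifferential.ideal C B ≤ nilradical (B ⊗[C] B) := by
  rw [← KaehlerDifferential.span_range_eq_ideal, Ideal.span_le]
  rintro _ ⟨b, rfl⟩
  obtain ⟨c, hc⟩ := h b
  refine mem_nilradical.mpr ⟨p, ?_⟩
  change ((1 : B) ⊗ₜ[C] b - b ⊗ₜ[C] 1) ^ p = 0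
  rw [one_tmul_sub_tmul_one_pow, ← hc, Algebra.algebraMap_eq_smul_one, ← smul_tmul, sub_self]

lemma Algebra.isEpi_of_pow_mem_range [Algebra.FormallyUnramified C B] [Algebra.FiniteType C B]
    (h : ∀ b : B, b ^ p ∈ (algebraMap C B).range) : Algebra.IsEpi C B := by
  have hnil : IsNilpotent (KaehlerDifferential.ideal C B) :=
    (KaehlerDifferential.ideal_fg C B).isNilpotent_iff_le_nilradical.mpr
      (KaehlerDifferential.ideal_le_nilradical_of_pow_mem_range h)
  have hdiag := Algebra.FormallyUnramified.ext' (R := C)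
    (Algebra.TensorProduct.lmul' C : B ⊗[C] B →ₐ[C] B).toRingHom hnil
    Algebra.TensorProduct.includeRight Algebra.TensorProduct.includeLeft (by simp)
  exact (Algebra.isEpi_iff_forall_one_tmul_eq C B).mpr (AlgHom.congr_fun hdiag)

lemma Algebra.surjective_algebraMap_of_pow_mem_range [Algebra.FormallyUnramified C B]
    [Algebra.FiniteType C B] (h : ∀ b : B, b ^ p ∈ (algebraMap C B).range) :
    Surjective (algebraMap C B) := by
  have : Algebra.IsIntegral C B := ⟨fun b => by
    obtain ⟨c, hc⟩ := h b
    exact .of_pow (expChar_pos B p) (hc ▸ isIntegral_algebraMap)⟩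
  have := Algebra.IsIntegral.finite (R := C) (A := B)
  exact Algebra.isEpi_iff_surjective_algebraMap_of_finite.mp (Algebra.isEpi_of_pow_mem_range h)

end Radicial

lemma AlgHom.surjective_of_pow_mem_range {p : ℕ} {A B B' : Type*} [CommRing A] [CommRing B]
    [CommRing B'] [Algebra A B] [Algebra A B'] [ExpChar B' p]
    [Algebra.FormallyUnramified A B'] [Algebra.FiniteType A B']
    (F : B →ₐ[A] B') (h : ∀ y : B', y ^ p ∈ F.range) : Surjective F := by
  have : Algebra.FormallyUnramified F.range B' := .of_restrictScalars A F.range B'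
  have : Algebra.FiniteType F.range B' := .of_restrictScalars_finiteType A _ _
  intro y
  obtain ⟨⟨_, x, rfl⟩, hx⟩ :=
    Algebra.surjective_algebraMap_of_pow_mem_range (C := F.range) (fun y => ⟨⟨_, h y⟩, rfl⟩) y
  exact ⟨x, hx⟩

lemma AlgHom.injective_of_surjective_of_isNilpotent_ker {A B B' : Type*} [CommRing A]
    [CommRing B] [CommRing B'] [Algebra A B] [Algebra A B'] [Algebra.FormallyUnramified A B]
    [Algebra.FormallySmooth A B'] (F : B →ₐ[A] B') (hF : Surjective F)
    (hker : IsNilpotent (RingHom.ker F)) : Injective F := by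
  let s := Algebra.FormallySmooth.liftOfSurjective (AlgHom.id A B') F hF hker
  have hs (y : B') : F (s y) = y :=
    Algebra.FormallySmooth.liftOfSurjective_apply (AlgHom.id A B') F hF hker y
  have hsF : s.comp F = AlgHom.id A B :=
    Algebra.FormallyUnramified.ext' (F : B →+* B') hker _ _ fun x => hs (F x)
  exact LeftInverse.injective (AlgHom.congr_fun hsF)

/-- `B`, to be made an `A`-algebra through `a • b = a ^ p * b`. -/
def FrobeniusTwist (_p : ℕ) (B : Type*) : Type _ := B

namespace FrobeniusTwist

variable (p : ℕ) (A B : Type u) [CommRing A] [CommRing B] [Algebra A B] [ExpChar A p]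

instance : CommRing (FrobeniusTwist p B) := ‹CommRing B›

instance [ExpChar B p] : ExpChar (FrobeniusTwist p B) p := ‹ExpChar B p›

instance : Algebra A (FrobeniusTwist p B) :=
  ((algebraMap A B).comp (frobenius A p)).toAlgebra

instance [PerfectRing A p] [Algebra.Etale A B] : Algebra.Etale A (FrobeniusTwist p B) :=
  RingHom.Etale.toAlgebra <|
    RingHom.Etale.stableUnderComposition _ (algebraMap A B)
      (.of_bijective (bijective_frobenius A p)) (RingHom.etale_algebraMap.mpr ‹Algebra.Etale A B›)

def relFrobenius [ExpChar B p] : B →ₐ[A] FrobeniusTwist p B where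
  toRingHom := frobenius B p
  commutes' a := (RingHom.map_frobenius (algebraMap A B) p a).symm

end FrobeniusTwist

theorem statement2 (p : ℕ) [Fact p.Prime] (A B : Type u) [CommRing A] [CommRing B]
    [CharP A p] [CharP B p] [Algebra A B] [Algebra.Etale A B] [PerfectRing A p] :
    PerfectRing B p := by
  let F := FrobeniusTwist.relFrobenius p A B
  have hsurj : Surjective F := F.surjective_of_pow_mem_range fun y => ⟨y, rfl⟩
  have hnil : IsNilpotent (RingHom.ker F) :=
    (Algebra.FinitePresentation.ker_fG_of_surjective F hsurj).isNilpotent_iff_le_nilradical.mpr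
      fun x hx => ⟨p, hx⟩
  exact ⟨⟨F.injective_of_surjective_of_isNilpotent_ker hsurj hnil, hsurj⟩⟩
end

section
/- Let 0 → A → B → C → 0 be a short exact sequence of abelian groups (i.e., A is a subgroup of an abelian group B and C ≅ B/A). If both A and C are isomorphic to a direct sum F ⊕ L with F a finite abelian group and L a free abelian group on a countable set, then B is also isomorphic to a direct sum of a finite abelian group and a free abelian group on a countable set. -/
/-!
An abelian group `G` lies in 𝒞 exactly when it is countable, its torsion subgroup `T` is finite
and `G ⧸ T` is free; then `G ≅ T × G ⧸ T`. For `N ≤ M` with `N` and `M ⧸ N` in 𝒞, let `P` be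
the preimage of the torsion subgroup of `M ⧸ N`: `M ⧸ P` is free, so `M ≅ P × M ⧸ P`, and `N` has
finite index in `P`. Hence the torsion of `P` is finite and `P ⧸ tors P` is torsion-free with a
free subgroup of finite index `n`. Such a group is free: if `K` is a finite set of basis vectors
whose span contains `n • r` for a set of coset representatives `r`, the group is the direct sum of
the span of the remaining basis vectors and the finitely generated group of elements whose
`n`-th multiple lies in the span of `K`.
-/

universe u

/-- An abelian group `G` belongs to the class 𝒞 if it is isomorphic to a direct sum
`F ⊕ L` with `F` a finite abelian group and `L` a free abelian group on a countable set. -/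
def InClassC (G : Type u) [AddCommGroup G] : Prop :=
  ∃ (F : Type u) (_ : AddCommGroup F) (ι : Type u),
    Finite F ∧ Countable ι ∧ Nonempty (G ≃+ F × FreeAbelianGroup ι)

open Submodule LinearMap

theorem Submodule.nonempty_linearEquiv_prod_of_projective_quotient {R M : Type*} [Ring R]
    [AddCommGroup M] [Module R M] (S : Submodule R M) [Module.Projective R (M ⧸ S)] :
    Nonempty (M ≃ₗ[R] S × (M ⧸ S)) := by
  obtain ⟨l, hl⟩ := S.mkQ.exists_rightInverse_of_surjective S.range_mkQ
  exact ⟨((LinearMap.exact_subtype_mkQ S).splitSurjectiveEquiv S.injective_subtype ⟨l, hl⟩).1⟩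

theorem Submodule.countable_of_countable_quotient {R M : Type*} [Ring R] [AddCommGroup M]
    [Module R M] (S : Submodule R M) [Countable S] [Countable (M ⧸ S)] : Countable M :=
  have : Countable ((M ⧸ S.toAddSubgroup) × S.toAddSubgroup) :=
    inferInstanceAs (Countable ((M ⧸ S) × S))
  Countable.of_equiv _
    (AddSubgroup.addGroupEquivQuotientProdAddSubgroup (s := S.toAddSubgroup)).symm

theorem Submodule.comap_subtype_torsion {R : Type*} [CommSemiring R] {M : Type*} [AddCommMonoid M]
    [Module R M] (S : Submodule R M) : (torsion R M).comap S.subtype = torsion R S := by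
  ext x
  simp only [mem_comap, coe_subtype, mem_torsion_iff]
  exact exists_congr fun a => by rw [← coe_smul_of_tower, ZeroMemClass.coe_eq_zero]

section Torsion

variable {M : Type*} [AddCommGroup M]

theorem Submodule.le_torsion_int_of_finite (T : Submodule ℤ M) [Finite T] : T ≤ torsion ℤ M := by
  intro x hx
  have hcard : (Nat.card T : ℤ) ≠ 0 := Nat.cast_ne_zero.mpr Nat.card_pos.ne'
  refine (mem_torsion_iff x).mpr ⟨⟨_, mem_nonZeroDivisors_of_ne_zero hcard⟩, ?_⟩
  rw [Submonoid.smul_def, natCast_zsmul]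
  exact congrArg Subtype.val (card_nsmul_eq_zero' (x := (⟨x, hx⟩ : T)))

theorem Submodule.torsion_int_eq_of_isTorsionFree_quotient (T : Submodule ℤ M) [Finite T]
    [Module.IsTorsionFree ℤ (M ⧸ T)] : torsion ℤ M = T := by
  refine le_antisymm (fun x hx => ?_) T.le_torsion_int_of_finite
  have hmk : T.mkQ x ∈ torsion ℤ (M ⧸ T) := by
    obtain ⟨a, ha⟩ := (mem_torsion_iff x).mp hx
    refine (mem_torsion_iff _).mpr ⟨a, ?_⟩
    rw [Submonoid.smul_def] at ha ⊢
    rw [← map_smul, ha, map_zero]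
  rwa [isTorsionFree_iff_torsion_eq_bot.mp inferInstance, mem_bot, mkQ_apply,
    Quotient.mk_eq_zero] at hmk

theorem Submodule.finite_torsion_of_finite_quotient (S : Submodule ℤ M) [Finite (torsion ℤ S)]
    [Finite (M ⧸ S)] : Finite (torsion ℤ M) := by
  let f := S.mkQ ∘ₗ (torsion ℤ M).subtype
  have hker : ∀ x : f.toAddMonoidHom.ker, ((x : torsion ℤ M) : M) ∈ S := fun x =>
    (Quotient.mk_eq_zero S).mp x.2
  refine (AddMonoidHom.finite_iff_finite_ker_range f.toAddMonoidHom).mpr ⟨?_, Subtype.finite⟩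
  refine Finite.of_injective (β := torsion ℤ S)
    (fun x => ⟨⟨_, hker x⟩, by rw [← S.comap_subtype_torsion]; exact (x : torsion ℤ M).2⟩) ?_
  intro x y hxy
  exact Subtype.ext (Subtype.ext congr(((($hxy : torsion ℤ S) : S) : M)))

end Torsion

theorem Submodule.exists_finset_mem_span_image {R M ι : Type*} [Semiring R] [AddCommMonoid M]
    [Module R M] {c : ι → M} {x : M} (hx : x ∈ span R (Set.range c)) :
    ∃ J : Finset ι, x ∈ span R (c '' J) := by
  obtain ⟨f, rfl⟩ := Finsupp.mem_span_range_iff_exists_finsupp.mp hx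
  exact ⟨f.support, sum_mem fun i hi => smul_mem _ _ (subset_span ⟨i, hi, rfl⟩)⟩

section FreeOfFiniteIndex

variable {M : Type*} [AddCommGroup M] [Module.IsTorsionFree ℤ M]

theorem Submodule.disjoint_comap_smul {L₁ L₂ : Submodule ℤ M} (h : Disjoint L₁ L₂) {n : ℤ}
    (hn : n ≠ 0) : Disjoint (L₁.comap (n • LinearMap.id)) L₂ := by
  rw [disjoint_def] at h ⊢
  intro m h₁ h₂
  have : n • m = n • 0 := (h _ h₁ (L₂.smul_mem n h₂)).trans (smul_zero n).symm
  exact smul_right_injective M hn this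

theorem Submodule.finite_comap_smul (L : Submodule ℤ M) [Module.Finite ℤ L] {n : ℤ} (hn : n ≠ 0) :
    Module.Finite ℤ (L.comap (n • LinearMap.id)) :=
  Module.Finite.of_injective
    ((n • LinearMap.id).restrict (p := L.comap (n • LinearMap.id)) fun _ hx => hx)
    fun _ _ hxy => Subtype.ext (smul_right_injective M hn (congrArg Subtype.val hxy))

theorem Module.free_of_linearIndependent_of_finite_quotient {ι : Type*} {c : ι → M}
    (hc : LinearIndependent ℤ c) [Finite (M ⧸ span ℤ (Set.range c))] : Module.Free ℤ M := by
  set S := span ℤ (Set.range c)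
  set n : ℤ := (Nat.card (M ⧸ S) : ℤ)
  have hn : n ≠ 0 := Nat.cast_ne_zero.mpr Nat.card_pos.ne'
  have hnS : ∀ m : M, n • m ∈ S := fun m => by
    rw [← Quotient.mk_eq_zero, Quotient.mk_smul, natCast_zsmul, card_nsmul_eq_zero']
  choose r hr using S.mkQ_surjective
  choose J hJ using fun q => exists_finset_mem_span_image (hnS (r q))
  set K : Set ι := ⋃ q, (J q : Set ι)
  set L₁ := span ℤ (c '' K)
  set L₂ := span ℤ (c '' Kᶜ)
  set M₁ := L₁.comap (n • LinearMap.id)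
  have hS : S = L₁ ⊔ L₂ := by
    rw [← span_union, ← Set.image_union, Set.union_compl_self, Set.image_univ]
  have hr₁ : ∀ q, r q ∈ M₁ := fun q =>
    span_mono (Set.image_mono (Set.subset_iUnion (fun q => (J q : Set ι)) q)) (hJ q)
  have hcompl : IsCompl M₁ L₂ := by
    refine ⟨disjoint_comap_smul (hc.disjoint_span_image disjoint_compl_right) hn, ?_⟩
    rw [codisjoint_iff_le_sup]
    intro m _
    have hm : m - r (S.mkQ m) ∈ L₁ ⊔ L₂ := by
      rw [← hS, ← Quotient.mk_eq_zero, Quotient.mk_sub, ← mkQ_apply, ← mkQ_apply, hr, sub_self]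
    obtain ⟨p, hp, q, hq, hpq⟩ := mem_sup.mp hm
    refine mem_sup.mpr ⟨r (S.mkQ m) + p, add_mem (hr₁ _) (L₁.smul_mem n hp), q, hq, ?_⟩
    rw [add_assoc, hpq, add_sub_cancel]
  have : Module.Finite ℤ L₁ :=
    Module.Finite.span_of_finite ℤ ((Set.finite_iUnion fun q => (J q).finite_toSet).image c)
  have : Module.Finite ℤ M₁ := L₁.finite_comap_smul hn
  have : Module.Free ℤ L₂ := by
    rw [show L₂ = _ from congrArg (span ℤ) (Set.image_eq_range c Kᶜ)]
    exact Module.Free.of_basis (Module.Basis.span (hc.comp _ Subtype.val_injective))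
  exact Module.Free.of_equiv (prodEquivOfIsCompl M₁ L₂ hcompl)

theorem Module.free_of_free_submodule_of_finite_quotient (S : Submodule ℤ M) [Module.Free ℤ S]
    [Finite (M ⧸ S)] : Module.Free ℤ M := by
  let b := Module.Free.chooseBasis ℤ S
  have hspan : span ℤ (Set.range (S.subtype ∘ b)) = S := by
    rw [Set.range_comp, span_image, b.span_eq, Submodule.map_top, range_subtype]
  have : Finite (M ⧸ span ℤ (Set.range (S.subtype ∘ b))) :=
    Finite.of_equiv _ (quotEquivOfEq _ _ hspan.symm).toEquiv
  exact free_of_linearIndependent_of_finite_quotient (b.linearIndependent.map' _ S.ker_subtype)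

end FreeOfFiniteIndex

theorem InClassC.of_addEquiv {G H : Type u} [AddCommGroup G] [AddCommGroup H] (e : G ≃+ H)
    (h : InClassC H) : InClassC G := by
  obtain ⟨F, _, ι, hF, hι, ⟨e'⟩⟩ := h
  exact ⟨F, _, ι, hF, hι, ⟨e.trans e'⟩⟩

theorem inClassC_of_finite (G : Type u) [AddCommGroup G] [Finite G] : InClassC G :=
  ⟨G, _, PEmpty, ‹_›, inferInstance, ⟨(AddEquiv.prodUnique (N := FreeAbelianGroup PEmpty)).symm⟩⟩

theorem Module.Free.exists_addEquiv_freeAbelianGroup (L : Type u) [AddCommGroup L] [Countable L]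
    [Module.Free ℤ L] : ∃ ι : Type u, Countable ι ∧ Nonempty (L ≃+ FreeAbelianGroup ι) := by
  let b := Module.Free.chooseBasis ℤ L
  exact ⟨_, b.injective.countable,
    ⟨b.repr.toAddEquiv.trans (FreeAbelianGroup.equivFinsupp _).symm⟩⟩

theorem InClassC.prod_free {X L : Type u} [AddCommGroup X] [AddCommGroup L] [Countable L]
    [Module.Free ℤ L] (h : InClassC X) : InClassC (X × L) := by
  obtain ⟨F, instF, ι, hF, hι, ⟨e⟩⟩ := h
  obtain ⟨κ, hκ, ⟨e'⟩⟩ := Module.Free.exists_addEquiv_freeAbelianGroup L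
  refine ⟨F, instF, ι ⊕ κ, hF, inferInstance, ⟨?_⟩⟩
  refine (e.prodCongr e').trans (AddEquiv.prodAssoc.trans (AddEquiv.prodCongr (.refl F) ?_))
  exact (FreeAbelianGroup.equivFinsupp ι).prodCongr (FreeAbelianGroup.equivFinsupp κ) |>.trans
    Finsupp.sumFinsuppAddEquivProdFinsupp.symm |>.trans (FreeAbelianGroup.equivFinsupp _).symm

theorem inClassC_iff {G : Type u} [AddCommGroup G] :
    InClassC G ↔ Countable G ∧ Finite (torsion ℤ G) ∧ Module.Free ℤ (G ⧸ torsion ℤ G) := by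
  constructor
  · rintro ⟨F, _, ι, hF, hι, ⟨e⟩⟩
    let f := LinearMap.snd ℤ F (FreeAbelianGroup ι) ∘ₗ e.toIntLinearEquiv.toLinearMap
    have hf : Function.Surjective f := Prod.snd_surjective.comp e.surjective
    let eQ := f.quotKerEquivOfSurjective hf
    have : Finite (ker f) := Finite.of_injective (fun x => (e x).1) fun x y hxy =>
      Subtype.ext (e.injective (Prod.ext hxy (x.2.trans y.2.symm)))
    have : Module.Free ℤ (G ⧸ ker f) := .of_equiv eQ.symm
    rw [(ker f).torsion_int_eq_of_isTorsionFree_quotient]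
    exact ⟨Countable.of_equiv _ e.toEquiv.symm, ‹_›, ‹_›⟩
  · rintro ⟨_, _, _⟩
    have : Countable (G ⧸ torsion ℤ G) := (torsion ℤ G).mkQ_surjective.countable
    obtain ⟨e⟩ := (torsion ℤ G).nonempty_linearEquiv_prod_of_projective_quotient
    exact (inClassC_of_finite _).prod_free.of_addEquiv e.toAddEquiv

theorem InClassC.of_finite_quotient {M : Type u} [AddCommGroup M] (S : Submodule ℤ M)
    (hS : InClassC S) [Finite (M ⧸ S)] : InClassC M := by
  obtain ⟨_, _, _⟩ := inClassC_iff.mp hS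
  let T := torsion ℤ M
  let h := T.mkQ ∘ₗ S.subtype
  have hker : ker h = torsion ℤ S := by rw [ker_comp, ker_mkQ, comap_subtype_torsion]
  have : Module.Free ℤ (range h) :=
    .of_equiv ((quotEquivOfEq _ _ hker.symm).trans h.quotKerEquivRange)
  have : Finite ((M ⧸ T) ⧸ range h) :=
    Finite.of_surjective (S.liftQ ((range h).mkQ ∘ₗ T.mkQ)
      fun x hx => (Quotient.mk_eq_zero _).mpr ⟨⟨x, hx⟩, rfl⟩)
      fun z => by
        obtain ⟨m, rfl⟩ := ((range h).mkQ_surjective.comp T.mkQ_surjective) z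
        exact ⟨S.mkQ m, rfl⟩
  have : Module.Free ℤ (M ⧸ T) := Module.free_of_free_submodule_of_finite_quotient (range h)
  exact inClassC_iff.mpr
    ⟨S.countable_of_countable_quotient, S.finite_torsion_of_finite_quotient, ‹_›⟩

theorem InClassC.of_submodule_of_quotient {M : Type u} [AddCommGroup M] {N : Submodule ℤ M}
    (hN : InClassC N) (hQ : InClassC (M ⧸ N)) : InClassC M := by
  obtain ⟨_, _, _⟩ := inClassC_iff.mp hQ
  let T := torsion ℤ (M ⧸ N)
  let P := ker (T.mkQ ∘ₗ N.mkQ)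
  let eP := (T.mkQ ∘ₗ N.mkQ).quotKerEquivOfSurjective (T.mkQ_surjective.comp N.mkQ_surjective)
  have : Module.Free ℤ (M ⧸ P) := .of_equiv eP.symm
  have : Countable ((M ⧸ N) ⧸ T) := T.mkQ_surjective.countable
  have : Countable (M ⧸ P) := Countable.of_equiv _ eP.symm.toEquiv
  have hNP : N ≤ P := (ker_mkQ N).ge.trans (ker_le_ker_comp _ _)
  have : Finite (P ⧸ N.comap P.subtype) := by
    let g := N.mkQ ∘ₗ P.subtype
    have hg : range g ≤ T := by
      rintro _ ⟨p, rfl⟩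
      exact (Quotient.mk_eq_zero T).mp p.2
    have : Finite (range g) := Finite.of_injective _ (inclusion_injective hg)
    exact Finite.of_equiv _
      ((quotEquivOfEq _ _ (by rw [ker_comp, ker_mkQ])).trans g.quotKerEquivRange).symm.toEquiv
  have hP : InClassC P :=
    (hN.of_addEquiv (comapSubtypeEquivOfLe hNP).toAddEquiv).of_finite_quotient _
  obtain ⟨e⟩ := P.nonempty_linearEquiv_prod_of_projective_quotient
  exact hP.prod_free.of_addEquiv e.toAddEquiv

theorem statement12 (B : Type u) [AddCommGroup B] (A : AddSubgroup B)
    (C : Type u) [AddCommGroup C] (hC : Nonempty (C ≃+ B ⧸ A))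
    (hA : InClassC A) (hquot : InClassC C) :
    InClassC B := by
  obtain ⟨e⟩ := hC
  exact InClassC.of_submodule_of_quotient (N := AddSubgroup.toIntSubmodule A) hA
    (hquot.of_addEquiv e.symm)
end

section
/- An abelian group G is isomorphic to a direct sum F ⊕ L, with F a finite abelian group and L a free abelian group on a countable set, if and only if there exists a surjective group homomorphism from a free abelian group on a countable set onto G whose kernel is a finitely generated group. -/
/-!
A finite group `F` is a quotient of the free abelian group `ℤ[F]` of finite rank, whose subgroups
are all finitely generated; presenting `L` by itself then presents `F ⊕ L`. Conversely, finitely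
many relations involve only a finite set `s` of generators, so the kernel lies in `ℤ[s]` and `G`
splits as the image of `ℤ[s]` times the free group on the remaining generators. That image is a
finitely generated abelian group, i.e. free of finite rank plus a finite group.
-/

universe u

open Finsupp

theorem AddSubgroup.FG.map {A B : Type*} [AddGroup A] [AddGroup B] {H : AddSubgroup A}
    (hH : H.FG) (f : A →+ B) : (H.map f).FG := by
  classical
  obtain ⟨S, rfl⟩ := hH
  exact ⟨S.image f, by rw [Finset.coe_image, AddMonoidHom.map_closure]⟩

namespace FreeAbelianGroup

noncomputable def sumAddEquivProd (α β : Type*) :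
    FreeAbelianGroup (α ⊕ β) ≃+ FreeAbelianGroup α × FreeAbelianGroup β :=
  (equivFinsupp _).trans <| sumFinsuppAddEquivProdFinsupp.trans <|
    (equivFinsupp α).symm.prodCongr (equivFinsupp β).symm

theorem addSubgroup_fg {α : Type*} [Finite α] (H : AddSubgroup (FreeAbelianGroup α)) : H.FG := by
  rw [← H.toIntSubmodule_toAddSubgroup, ← Submodule.fg_iff_addSubgroup_fg]
  exact IsNoetherian.noetherian _

end FreeAbelianGroup

theorem Finsupp.exists_finset_le_supported_of_fg {ι R M : Type*} [Semiring R] [AddCommMonoid M]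
    [Module R M] {K : Submodule R (ι →₀ M)} (hK : K.FG) :
    ∃ s : Finset ι, K ≤ supported M R ↑s := by
  classical
  obtain ⟨T, rfl⟩ := hK
  refine ⟨T.sup support, Submodule.span_le.2 fun t ht => ?_⟩
  exact (mem_supported R _).2 (by exact_mod_cast Finset.le_sup (f := support) ht)

theorem Finsupp.isCompl_supported_compl {ι R M : Type*} [Semiring R] [AddCommMonoid M]
    [Module R M] (s : Set ι) : IsCompl (supported M R s) (supported M R sᶜ) :=
  ⟨disjoint_supported_supported isCompl_compl.disjoint,
    codisjoint_supported_supported isCompl_compl.codisjoint⟩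

section Splitting

variable {R M N : Type*} [Ring R] [AddCommGroup M] [AddCommGroup N] [Module R M] [Module R N]
  {f : M →ₗ[R] N} {P Q : Submodule R M}

theorem LinearMap.isCompl_map_of_ker_le (hf : Function.Surjective f) (hPQ : IsCompl P Q)
    (hker : LinearMap.ker f ≤ P) : IsCompl (P.map f) (Q.map f) := by
  refine ⟨Submodule.disjoint_def.2 ?_, codisjoint_iff.2 ?_⟩
  · rintro _ ⟨p, hp, rfl⟩ ⟨q, hq, hpq⟩
    have hqP : q ∈ P := by
      simpa using P.sub_mem hp (hker (show p - q ∈ LinearMap.ker f by simp [hpq]))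
    rw [← hpq, Submodule.disjoint_def.1 hPQ.disjoint q hqP hq, map_zero]
  · rw [← Submodule.map_sup, hPQ.sup_eq_top, Submodule.map_top, LinearMap.range_eq_top.2 hf]

/-- `f` maps `Q` isomorphically onto a complement of `f(P)`. -/
noncomputable def LinearMap.equivMapProdOfKerLe (hf : Function.Surjective f) (hPQ : IsCompl P Q)
    (hker : LinearMap.ker f ≤ P) : N ≃ₗ[R] P.map f × Q :=
  let eQ : Q ≃ₗ[R] Q.map f := LinearEquiv.ofBijective (f.submoduleMap Q)
    ⟨submoduleMap_injective_of_injOn (injOn_of_disjoint_ker subset_rfl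
      (hPQ.disjoint.symm.mono_right hker)),
      submoduleMap_surjective f Q⟩
  ((Submodule.prodEquivOfIsCompl _ _ (isCompl_map_of_ker_le hf hPQ hker)).symm).trans
    ((LinearEquiv.refl R _).prodCongr eQ.symm)

end Splitting

theorem exists_surjective_ker_fg_finite_prod (F ι : Type*) [AddCommGroup F] [Finite F] :
    ∃ f : FreeAbelianGroup (F ⊕ ι) →+ F × FreeAbelianGroup ι,
      Function.Surjective f ∧ f.ker.FG := by
  let π : FreeAbelianGroup F →+ F := FreeAbelianGroup.lift id
  have hπ : Function.Surjective π := fun a => ⟨.of a, FreeAbelianGroup.lift_apply_of _ _⟩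
  let d := FreeAbelianGroup.sumAddEquivProd F ι
  refine ⟨(π.prodMap (AddMonoidHom.id _)).comp (d : FreeAbelianGroup (F ⊕ ι) →+ _),
    (hπ.prodMap Function.surjective_id).comp d.surjective, ?_⟩
  rw [AddMonoidHom.ker_comp_addEquiv, AddMonoidHom.ker_prodMap, AddMonoidHom.ker_id]
  exact ((FreeAbelianGroup.addSubgroup_fg _).prod .bot).map _

theorem inClassC_of_addEquiv_fg_prod {G H κ : Type u} [AddCommGroup G] [AddCommGroup H]
    [AddGroup.FG H] [Countable κ] (e : G ≃+ H × FreeAbelianGroup κ) : InClassC G := by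
  obtain ⟨n, ι, _, p, hp, k, ⟨φ⟩⟩ := AddCommGroup.equiv_free_prod_directSum_zmod H
  have : ∀ i, NeZero (p i ^ k i) := fun i => ⟨pow_ne_zero _ (hp i).ne_zero⟩
  let T := DirectSum ι fun i => ZMod (p i ^ k i)
  have : Finite T := Finite.of_equiv _ DFinsupp.equivFunOnFintype.symm
  let free : (Fin n →₀ ℤ) ≃+ FreeAbelianGroup (ULift.{u} (Fin n)) :=
    (Finsupp.domCongr Equiv.ulift.symm).trans (FreeAbelianGroup.equivFinsupp _).symm
  refine ⟨ULift.{u} T, inferInstance, ULift.{u} (Fin n) ⊕ κ, inferInstance, inferInstance,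
    ⟨?_⟩⟩
  exact e.trans <| (φ.trans AddEquiv.prodComm).prodCongr (.refl _) |>.trans <|
    AddEquiv.prodAssoc.trans <| AddEquiv.ulift.symm.prodCongr <|
      (free.prodCongr (.refl _)).trans (FreeAbelianGroup.sumAddEquivProd _ _).symm

theorem inClassC_of_surjective_of_ker_fg {G ι : Type u} [AddCommGroup G] [Countable ι]
    {g : (ι →₀ ℤ) →ₗ[ℤ] G} (hg : Function.Surjective g) (hker : (LinearMap.ker g).FG) :
    InClassC G := by
  obtain ⟨s, hs⟩ := exists_finset_le_supported_of_fg hker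
  let e := g.equivMapProdOfKerLe hg (isCompl_supported_compl (s : Set ι)) hs
  have : AddGroup.FG ((supported ℤ ℤ (s : Set ι)).map g) := by
    have : Module.Finite ℤ (supported ℤ ℤ (s : Set ι)) :=
      Module.Finite.equiv (supportedEquivFinsupp _).symm
    rw [← Module.Finite.iff_addGroup_fg]
    exact Module.Finite.map _ _
  let eQ : supported ℤ ℤ (s : Set ι)ᶜ ≃+ FreeAbelianGroup ↥(s : Set ι)ᶜ :=
    (supportedEquivFinsupp _).toAddEquiv.trans (FreeAbelianGroup.equivFinsupp _).symm
  exact inClassC_of_addEquiv_fg_prod (e.toAddEquiv.trans ((AddEquiv.refl _).prodCongr eQ))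

theorem statement13 (G : Type u) [AddCommGroup G] :
    InClassC G ↔
      ∃ (ι : Type u) (f : FreeAbelianGroup ι →+ G),
        Countable ι ∧ Function.Surjective f ∧ f.ker.FG := by
  constructor
  · rintro ⟨F, _, ι, _, _, ⟨e⟩⟩
    obtain ⟨f, hf, hker⟩ := exists_surjective_ker_fg_finite_prod F ι
    refine ⟨F ⊕ ι, (e.symm : F × FreeAbelianGroup ι →+ G).comp f, inferInstance,
      e.symm.surjective.comp hf, ?_⟩
    rwa [AddMonoidHom.ker_addEquiv_comp]
  · rintro ⟨ι, f, _, hf, hker⟩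
    let c : FreeAbelianGroup ι ≃ₗ[ℤ] (ι →₀ ℤ) :=
      (FreeAbelianGroup.equivFinsupp ι).toIntLinearEquiv
    refine inClassC_of_surjective_of_ker_fg (g := f.toIntLinearMap ∘ₗ c.symm.toLinearMap)
      (hf.comp c.symm.surjective) ?_
    rw [LinearMap.ker_comp, Submodule.comap_equiv_eq_map_symm]
    refine Submodule.FG.map _ ?_
    rwa [Submodule.fg_iff_addSubgroup_fg]
end
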